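/- arXiv:2011.12975 — 5 statements merged into one kernel-verified Lean document; each statement's English description precedes it below -/
import Mathlib

section
/- Let G be a connected simple graph, H a simple graph, K a natural number, and f a map from the vertices of G onto the vertices of H such that: (a) whenever x and y are adjacent in G, either f(x) = f(y) or f(x) is adjacent to f(y) in H; (b) for every pair of adjacent vertices u, v of H there exist adjacent vertices x, y of G with f(x) = u and f(y) = v; and (c) every fiber f⁻¹(u) has diameter at most K in the graph metric of G (i.e. any two vertices in the same fiber are at graph distance at most K in G). Then H is connected and for all vertices x, y of G one has d_H(f(x), f(y)) ≤ d_G(x, y) and d_G(x, y) ≤ (K+1)·d_H(f(x), f(y)) + K; in particular, f is a surjective (K+1, K)-quasi-isometry from G to H. -/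
/-- A surjective graph map whose fibers have diameter at most `K`, which does not
increase adjacency and realises every edge of the target, is a surjective
`(K+1, K)`-quasi-isometry; in particular the target is connected. -/
theorem quotient_map_with_bounded_classes_is_quasi_isometry
    {V W : Type*} (G : SimpleGraph V) (H : SimpleGraph W) (K : ℕ) (f : V → W)
    (hG : G.Connected) (hsurj : Function.Surjective f)
    (ha : ∀ x y : V, G.Adj x y → f x = f y ∨ H.Adj (f x) (f y))
    (hb : ∀ u v : W, H.Adj u v → ∃ x y : V, G.Adj x y ∧ f x = u ∧ f y = v)
    (hc : ∀ x y : V, f x = f y → G.dist x y ≤ K) :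
    H.Connected ∧
      ∀ x y : V,
        H.dist (f x) (f y) ≤ G.dist x y ∧
          G.dist x y ≤ (K + 1) * H.dist (f x) (f y) + K := by
  -- push walks forward along f
  have key : ∀ {x y : V} (p : G.Walk x y),
      ∃ q : H.Walk (f x) (f y), q.length ≤ p.length := by
    intro x y p
    induction p with
    | nil => exact ⟨SimpleGraph.Walk.nil, le_rfl⟩
    | @cons a b c h p ih =>
      obtain ⟨q, hq⟩ := ih
      rcases ha _ _ h with h' | h'
      · exact ⟨q.copy h'.symm rfl, by simpa using hq.trans (Nat.le_succ _)⟩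
      · exact ⟨q.cons h', by simpa using Nat.succ_le_succ hq⟩
  have hconn : H.Connected := by
    rw [SimpleGraph.connected_iff]
    refine ⟨fun u v => ?_, hG.nonempty.map f⟩
    obtain ⟨x, rfl⟩ := hsurj u
    obtain ⟨y, rfl⟩ := hsurj v
    obtain ⟨q, -⟩ := key (hG x y).some
    exact ⟨q⟩
  refine ⟨hconn, fun x y => ⟨?_, ?_⟩⟩
  · obtain ⟨p, hp⟩ := (hG x y).exists_walk_length_eq_dist
    obtain ⟨q, hq⟩ := key p
    exact (H.dist_le q).trans (hp ▸ hq)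
  · -- lift walks in H back to bounded distances in G
    have lift : ∀ {u v : W} (q : H.Walk u v) (x y : V), f x = u → f y = v →
        G.dist x y ≤ (K + 1) * q.length + K := by
      intro u v q
      induction q with
      | nil =>
        intro x y hx hy
        simpa using hc x y (hx.trans hy.symm)
      | @cons a b c h q ih =>
        intro x y hx hy
        obtain ⟨s, t, hst, hs, ht⟩ := hb a b h
        have h1 : G.dist x s ≤ K := hc x s (by rw [hx, hs])
        have h2 : G.dist s t ≤ 1 := G.dist_le hst.toWalk
        have h3 : G.dist t y ≤ (K + 1) * q.length + K := ih t y ht hy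
        calc G.dist x y ≤ G.dist x s + G.dist s y := hG.dist_triangle
          _ ≤ G.dist x s + (G.dist s t + G.dist t y) :=
              Nat.add_le_add_left hG.dist_triangle _
          _ ≤ (K + 1) * (q.length + 1) + K := by
              have e : (K + 1) * (q.length + 1) + K
                  = ((K + 1) * q.length + K) + 1 + K := by ring
              omega
          _ = (K + 1) * (SimpleGraph.Walk.cons h q).length + K := by simp
    obtain ⟨q, hq⟩ := (hconn (f x) (f y)).exists_walk_length_eq_dist
    simpa [hq] using lift q x y rfl rfl
end

section
/- Let T be a simple graph that is a tree (connected and acyclic), let r be a vertex of T, and let (x_n)_{n∈ℕ} be a sequence of vertices of T. Then the following are equivalent: (i) for every M ∈ ℕ there exists N such that for all i, j ≥ N one has d(x_i, r) + d(x_j, r) − d(x_i, x_j) ≥ M (i.e. the sequence is admissible: the Gromov products at r tend to infinity); (ii) there exists a sequence of vertices (J_k)_{k∈ℕ} with J_0 = r, with J_k adjacent to J_{k+1} and d(r, J_k) = k for all k, such that for every k there exists N with d(r, x_n) = k + d(J_k, x_n) for all n ≥ N (i.e. the vertex J_k lies on the unique geodesic from r to x_n for all n sufficiently large). -/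
/-!
In a tree, if the Gromov product `(a|b)_r` is at least `k`, the geodesics from `r` to `a` and to
`b` share their first `k` vertices: when `r` is not on the geodesic from `a` to `b`, the first edges
of the geodesics from `r` cannot differ, since every edge of a tree is a bridge. An admissible
sequence therefore determines, for each `k`, the vertex `J k` at distance `k` from `r` through which
the geodesics to `x n` eventually pass, and uniqueness of paths in a tree makes consecutive `J k`
adjacent. Conversely, if the geodesics to `x i` and `x j` pass through `J M`, then
`(x i|x j)_r ≥ M` by the triangle inequality through `J M`.
-/

namespace SimpleGraph

variable {V : Type*} {G : SimpleGraph V}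

lemma Walk.dist_eq_dist_snd_add_one {u v : V} {p : G.Walk u v} (hp : p.length = G.dist u v)
    (hnil : ¬p.Nil) : G.dist u v = G.dist p.snd v + 1 := by
  have h_tail := dist_le p.tail
  have h_len := p.length_tail_add_one hnil
  have h_tri := (p.adj_snd hnil).reachable.dist_triangle_left v
  rw [dist_eq_one_iff_adj.mpr (p.adj_snd hnil)] at h_tri
  omega

namespace IsTree

variable {T : SimpleGraph V}

lemma eq_getVert_of_dist_eq_add (hT : T.IsTree) {r a w : V} {k : ℕ} {p : T.Walk r a}
    (hp : p.IsPath) (hw : T.dist r w = k) (hwa : T.dist r a = k + T.dist w a) :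
    w = p.getVert k := by
  obtain ⟨g₁, hg₁⟩ := hT.connected.exists_walk_length_eq_dist r w
  obtain ⟨g₂, hg₂⟩ := hT.connected.exists_walk_length_eq_dist w a
  have hpath : (g₁.append g₂).IsPath :=
    Walk.isPath_of_length_eq_dist _ (by rw [Walk.length_append, hg₁, hg₂, hw, hwa])
  rw [← (hT.existsUnique_path r a).unique hpath hp, ← hw, ← hg₁, Walk.getVert_append',
    if_pos le_rfl, Walk.getVert_length]

lemma eq_of_dist_eq_add (hT : T.IsTree) {r a w w' : V} {k : ℕ} (hw : T.dist r w = k)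
    (hwa : T.dist r a = k + T.dist w a) (hw' : T.dist r w' = k)
    (hw'a : T.dist r a = k + T.dist w' a) : w = w' := by
  obtain ⟨p, hp, -⟩ := hT.connected.exists_path_of_dist r a
  rw [hT.eq_getVert_of_dist_eq_add hp hw hwa, hT.eq_getVert_of_dist_eq_add hp hw' hw'a]

lemma adj_of_dist_eq_add (hT : T.IsTree) {r a w w' : V} {k : ℕ} (hw : T.dist r w = k)
    (hwa : T.dist r a = k + T.dist w a) (hw' : T.dist r w' = k + 1)
    (hw'a : T.dist r a = k + 1 + T.dist w' a) : T.Adj w w' := by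
  obtain ⟨p, hp, hpl⟩ := hT.connected.exists_path_of_dist r a
  have hlt : k < p.length := by omega
  rw [hT.eq_getVert_of_dist_eq_add hp hw hwa, hT.eq_getVert_of_dist_eq_add hp hw' hw'a]
  exact p.adj_getVert_succ hlt

lemma dist_eq_add_of_snd_ne (hT : T.IsTree) {r a b : V} {p : T.Walk r a} {q : T.Walk r b}
    (hp : p.IsPath) (hq : q.IsPath) (hsnd : p.snd ≠ q.snd) :
    T.dist a b = T.dist r a + T.dist r b := by
  by_cases hnil : p.Nil
  · obtain rfl := hnil.eq
    simp
  have hbridge : T.IsBridge s(p.snd, r) :=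
    isAcyclic_iff_forall_adj_isBridge.mp hT.isAcyclic (p.adj_snd hnil).symm
  obtain ⟨g, hg⟩ := hT.connected.exists_walk_length_eq_dist a b
  -- The walk `p.snd → a → b → r` crosses the bridge; neither `p.tail` nor `q` contains it.
  have hmem := isBridge_iff_forall_walk_mem_edges.mp hbridge (p.tail.append (g.append q.reverse))
  have hr : r ∈ g.support := by
    simp only [Walk.edges_append, Walk.edges_reverse, List.mem_append, List.mem_reverse] at hmem
    rcases hmem with h | h | h
    · have h_nodup := Walk.cons_support_tail hnil ▸ hp.support_nodup
      exact absurd (p.tail.snd_mem_support_of_mem_edges h) (List.nodup_cons.mp h_nodup).1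
    · exact g.snd_mem_support_of_mem_edges h
    · exact absurd (hq.eq_snd_of_mem_edges (Sym2.eq_swap ▸ h)) hsnd
  obtain ⟨g₁, g₂, rfl⟩ := Walk.mem_support_iff_exists_append.mp hr
  have h₁ := dist_le g₁
  have h₂ := dist_le g₂
  have h_tri := hT.connected.dist_triangle (u := a) (v := r) (w := b)
  rw [Walk.length_append] at hg
  rw [dist_comm (u := a) (v := r)] at h₁ h_tri
  omega

lemma exists_adj_dist_eq_add_one (hT : T.IsTree) {r a b : V}
    (h : T.dist a b < T.dist r a + T.dist r b) :
    ∃ s, T.Adj r s ∧ T.dist r a = T.dist s a + 1 ∧ T.dist r b = T.dist s b + 1 := by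
  obtain ⟨p, hp, hpl⟩ := hT.connected.exists_path_of_dist r a
  obtain ⟨q, hq, hql⟩ := hT.connected.exists_path_of_dist r b
  have hsnd : p.snd = q.snd := by
    by_contra hne
    have := hT.dist_eq_add_of_snd_ne hp hq hne
    omega
  have hpnil : ¬p.Nil := fun hnil ↦ by
    obtain rfl := hnil.eq
    simp at h
  have hqnil : ¬q.Nil := fun hnil ↦ by
    obtain rfl := hnil.eq
    simp [dist_comm] at h
  refine ⟨p.snd, p.adj_snd hpnil, Walk.dist_eq_dist_snd_add_one hpl hpnil, ?_⟩
  rw [hsnd]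
  exact Walk.dist_eq_dist_snd_add_one hql hqnil

lemma exists_dist_eq_of_dist_add_two_mul_le (hT : T.IsTree) (k : ℕ) {r a b : V}
    (h : T.dist a b + 2 * k ≤ T.dist r a + T.dist r b) :
    ∃ w, T.dist r w = k ∧ T.dist r a = k + T.dist w a ∧ T.dist r b = k + T.dist w b := by
  induction k generalizing r with
  | zero => exact ⟨r, dist_self, by simp, by simp⟩
  | succ k ih =>
    obtain ⟨s, hs, hsa, hsb⟩ :=
      hT.exists_adj_dist_eq_add_one (r := r) (a := a) (b := b) (by omega)
    obtain ⟨w, hw, hwa, hwb⟩ := ih (r := s) (by omega)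
    have hrs : T.dist r s = 1 := dist_eq_one_iff_adj.mpr hs
    have h_tri₁ := hT.connected.dist_triangle (u := r) (v := s) (w := w)
    have h_tri₂ := hT.connected.dist_triangle (u := r) (v := w) (w := a)
    exact ⟨w, by omega, by omega, by omega⟩

lemma exists_eventually_dist_eq_add (hT : T.IsTree) {r : V} {x : ℕ → V} {N : ℕ} (k : ℕ)
    (hN : ∀ i j, N ≤ i → N ≤ j →
      T.dist (x i) (x j) + 2 * k ≤ T.dist r (x i) + T.dist r (x j)) :
    ∃ w, T.dist r w = k ∧ ∀ n, N ≤ n → T.dist r (x n) = k + T.dist w (x n) := by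
  obtain ⟨w, hw, hwN, -⟩ := hT.exists_dist_eq_of_dist_add_two_mul_le k (hN N N le_rfl le_rfl)
  refine ⟨w, hw, fun n hn ↦ ?_⟩
  obtain ⟨w', hw', hw'N, hw'n⟩ := hT.exists_dist_eq_of_dist_add_two_mul_le k (hN N n le_rfl hn)
  rwa [hT.eq_of_dist_eq_add hw hwN hw' hw'N]

end IsTree

end SimpleGraph

/-- In a tree with basepoint `r`, a sequence of vertices is admissible (its Gromov
products at `r` tend to infinity) if and only if there is a geodesic ray from `r`
through which the geodesics from `r` to the terms of the sequence eventually pass. -/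
theorem admissible_iff_exists_geodesic_ray
    {V : Type*} (T : SimpleGraph V) (hT : T.IsTree) (r : V) (x : ℕ → V) :
    (∀ M : ℕ, ∃ N : ℕ, ∀ i j : ℕ, N ≤ i → N ≤ j →
        T.dist (x i) (x j) + M ≤ T.dist (x i) r + T.dist (x j) r) ↔
      (∃ J : ℕ → V, J 0 = r ∧ (∀ k, T.Adj (J k) (J (k + 1))) ∧
        (∀ k, T.dist r (J k) = k) ∧
        ∀ k, ∃ N : ℕ, ∀ n : ℕ, N ≤ n →
          T.dist r (x n) = k + T.dist (J k) (x n)) := by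
  simp only [SimpleGraph.dist_comm (v := r)]
  constructor
  · intro h
    choose N hN using h
    choose J hJr hJ using fun k ↦ hT.exists_eventually_dist_eq_add k (hN (2 * k))
    refine ⟨J, (hT.connected.dist_eq_zero_iff.mp (hJr 0)).symm, fun k ↦ ?_, hJr,
      fun k ↦ ⟨N (2 * k), hJ k⟩⟩
    exact hT.adj_of_dist_eq_add (hJr k) (hJ k _ (le_max_left _ (N (2 * (k + 1)))))
      (hJr (k + 1)) (hJ (k + 1) _ (le_max_right (N (2 * k)) _))
  · rintro ⟨J, -, -, -, hJ⟩ M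
    obtain ⟨N, hN⟩ := hJ M
    refine ⟨N, fun i j hi hj ↦ ?_⟩
    have h_tri := hT.connected.dist_triangle (u := x i) (v := J M) (w := x j)
    rw [SimpleGraph.dist_comm (u := x i) (v := J M)] at h_tri
    linarith [hN i hi, hN j hj]
end

section
/- Let T be a simple graph that is a tree (connected and acyclic) and let r be a vertex of T. Let (x_n) and (y_n) be sequences of vertices, and suppose (J_k)_{k∈ℕ} and (J'_k)_{k∈ℕ} are sequences of vertices with J_0 = J'_0 = r, with J_k adjacent to J_{k+1}, J'_k adjacent to J'_{k+1}, d(r, J_k) = d(r, J'_k) = k for all k, and such that for every k there exists N with d(r, x_n) = k + d(J_k, x_n) and d(r, y_n) = k + d(J'_k, y_n) for all n ≥ N. Then the following are equivalent: (i) for every M ∈ ℕ there exists N such that for all i, j ≥ N one has d(x_i, r) + d(y_j, r) − d(x_i, y_j) ≥ M (i.e. the two admissible sequences are equivalent); (ii) J_k = J'_k for all k. -/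
/-!
If the two rays agree up to `J M`, then for large indices both `x i` and `y j` lie beyond `J M`,
and the triangle inequality through `J M` bounds `d(x i, r) + d(y j, r) - d(x i, y j)` below
by `2 M`. If instead the rays first split after `J m`, then for large `n` the geodesics from
`J m` to `x n` and to `y n` leave `J m` through the different neighbours `J (m + 1)` and
`J' (m + 1)`. In a tree their concatenation never backtracks, so it is the geodesic from `x n`
to `y n`; hence that quantity is exactly `2 m` and the Gromov products stay bounded.
-/

namespace SimpleGraph

variable {V : Type*} {G : SimpleGraph V}

lemma IsTree.length_eq_dist_of_isPath (hG : G.IsTree) {u v : V} {p : G.Walk u v}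
    (hp : p.IsPath) : p.length = G.dist u v := by
  obtain ⟨q, hq, hql⟩ := hG.connected.exists_path_of_dist u v
  have hpq : p = q :=
    congrArg Subtype.val <| (hG.isAcyclic.subsingleton_path u v).elim ⟨p, hp⟩ ⟨q, hq⟩
  rw [hpq, hql]

lemma IsAcyclic.isPath_concat_append_cons (hG : G.IsAcyclic) {x a v b y : V}
    {p : G.Walk x a} {q : G.Walk b y} (ha : G.Adj a v) (hb : G.Adj v b) (hab : a ≠ b)
    (hp : (p.concat ha).IsPath) (hq : (Walk.cons hb q).IsPath) :
    ((p.concat ha).append (Walk.cons hb q)).IsPath := by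
  -- in an acyclic graph, a walk that never backtracks along an edge is a path
  rw [hG.isPath_iff_isChain] at hp hq ⊢
  rw [Walk.edges_append, List.isChain_append]
  exact ⟨hp, hq, by simp [Walk.edges_concat, hab, ha.ne]⟩

lemma IsTree.dist_eq_add_of_adj_of_adj (hG : G.IsTree) {v a b x y : V}
    (ha : G.Adj v a) (hb : G.Adj v b) (hab : a ≠ b)
    (hx : G.dist a x + 1 = G.dist v x) (hy : G.dist b y + 1 = G.dist v y) :
    G.dist x y = G.dist v x + G.dist v y := by
  obtain ⟨p, -, hpl⟩ := hG.connected.exists_path_of_dist x a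
  obtain ⟨q, -, hql⟩ := hG.connected.exists_path_of_dist b y
  have hpl' : (p.concat ha.symm).length = G.dist x v := by
    rw [Walk.length_concat, hpl, dist_comm, hx, dist_comm]
  have hql' : (Walk.cons hb q).length = G.dist v y := by
    rw [Walk.length_cons, hql, hy]
  have hpath := hG.isAcyclic.isPath_concat_append_cons ha.symm hb hab
    ((p.concat ha.symm).isPath_of_length_eq_dist hpl')
    ((Walk.cons hb q).isPath_of_length_eq_dist hql')
  rw [← hG.length_eq_dist_of_isPath hpath, Walk.length_append, hpl', hql', dist_comm]

lemma Connected.dist_add_two_mul_le (hG : G.Connected) {r c x y : V} {k : ℕ}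
    (hx : G.dist r x = k + G.dist c x) (hy : G.dist r y = k + G.dist c y) :
    G.dist x y + 2 * k ≤ G.dist x r + G.dist y r := by
  have := hG.dist_triangle (u := x) (v := c) (w := y)
  rw [dist_comm (u := x) (v := c)] at this
  rw [dist_comm (u := x) (v := r), dist_comm (u := y) (v := r)]
  omega

lemma IsTree.dist_add_two_mul_eq_of_adj_of_adj (hG : G.IsTree) {r c a b x y : V} {k : ℕ}
    (ha : G.Adj c a) (hb : G.Adj c b) (hab : a ≠ b)
    (hxc : G.dist r x = k + G.dist c x) (hxa : G.dist r x = k + 1 + G.dist a x)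
    (hyc : G.dist r y = k + G.dist c y) (hyb : G.dist r y = k + 1 + G.dist b y) :
    G.dist x y + 2 * k = G.dist x r + G.dist y r := by
  rw [hG.dist_eq_add_of_adj_of_adj ha hb hab (by omega) (by omega), dist_comm (u := x) (v := r),
    dist_comm (u := y) (v := r)]
  omega

end SimpleGraph

lemma exists_eq_and_succ_ne {α : Type*} {f g : ℕ → α} (h0 : f 0 = g 0) (hfg : f ≠ g) :
    ∃ m, f m = g m ∧ f (m + 1) ≠ g (m + 1) := by
  by_contra! hstep
  exact hfg <| funext fun n ↦ Nat.rec h0 hstep n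

theorem admissible_sequences_equivalent_iff_same_ray_general
    {V : Type*} (T : SimpleGraph V) (hT : T.IsTree) (r : V)
    (x y : ℕ → V) (J J' : ℕ → V)
    (hJ0 : J 0 = r) (hJ'0 : J' 0 = r)
    (hJadj : ∀ k, T.Adj (J k) (J (k + 1)))
    (hJ'adj : ∀ k, T.Adj (J' k) (J' (k + 1)))
    (hray : ∀ k, ∃ N : ℕ, ∀ n : ℕ, N ≤ n →
      T.dist r (x n) = k + T.dist (J k) (x n) ∧
        T.dist r (y n) = k + T.dist (J' k) (y n)) :
    (∀ M : ℕ, ∃ N : ℕ, ∀ i j : ℕ, N ≤ i → N ≤ j →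
        T.dist (x i) (y j) + M ≤ T.dist (x i) r + T.dist (y j) r) ↔
      (∀ k, J k = J' k) := by
  constructor
  · intro hequiv
    by_contra! hne
    obtain ⟨m, hm, hm1⟩ := exists_eq_and_succ_ne (hJ0.trans hJ'0.symm) (Function.ne_iff.mpr hne)
    obtain ⟨N, hN⟩ := hequiv (2 * m + 1)
    obtain ⟨Nm, hNm⟩ := hray m
    obtain ⟨Nm1, hNm1⟩ := hray (m + 1)
    set n := max N (max Nm Nm1)
    obtain ⟨hxm, hym⟩ := hNm n (by omega)
    obtain ⟨hxm1, hym1⟩ := hNm1 n (by omega)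
    rw [← hm] at hym
    have hgromov := hT.dist_add_two_mul_eq_of_adj_of_adj (hJadj m) (hm ▸ hJ'adj m) hm1
      hxm hxm1 hym hym1
    have := hN n n (by omega) (by omega)
    omega
  · intro hsame M
    obtain ⟨N, hN⟩ := hray M
    refine ⟨N, fun i j hi hj ↦ ?_⟩
    have := hT.connected.dist_add_two_mul_le (hN i hi).1 (hsame M ▸ (hN j hj).2)
    omega

/-- In a tree with basepoint `r`, two admissible sequences with associated geodesic
rays `J` and `J'` are equivalent (their mutual Gromov products at `r` tend to
infinity) if and only if the geodesic rays coincide. -/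
theorem admissible_sequences_equivalent_iff_same_ray
    {V : Type*} (T : SimpleGraph V) (hT : T.IsTree) (r : V)
    (x y : ℕ → V) (J J' : ℕ → V)
    (hJ0 : J 0 = r) (hJ'0 : J' 0 = r)
    (hJadj : ∀ k, T.Adj (J k) (J (k + 1)))
    (hJ'adj : ∀ k, T.Adj (J' k) (J' (k + 1)))
    (hJdist : ∀ k, T.dist r (J k) = k)
    (hJ'dist : ∀ k, T.dist r (J' k) = k)
    (hray : ∀ k, ∃ N : ℕ, ∀ n : ℕ, N ≤ n →
      T.dist r (x n) = k + T.dist (J k) (x n) ∧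
        T.dist r (y n) = k + T.dist (J' k) (y n)) :
    (∀ M : ℕ, ∃ N : ℕ, ∀ i j : ℕ, N ≤ i → N ≤ j →
        T.dist (x i) (y j) + M ≤ T.dist (x i) r + T.dist (y j) r) ↔
      (∀ k, J k = J' k) :=
  admissible_sequences_equivalent_iff_same_ray_general T hT r x y J J' hJ0 hJ'0 hJadj hJ'adj hray
end

section
/- Let G and G' be simple graphs, each nonempty, connected and acyclic (i.e. trees), and suppose that every vertex of G and every vertex of G' has countably infinite degree (its set of neighbours is infinite and countable). Then G and G' are isomorphic as simple graphs. -/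
/-!
Every such tree is isomorphic to a fixed model, the tree of finite lists of naturals. Root the
tree at a vertex `r` and, for each vertex `v` and each neighbour-to-avoid `p`, enumerate the
neighbours of `v` other than `p` by `ℕ`. A list `[nₖ, …, n₁]` then names the vertex reached from
`r` by stepping, at stage `i`, to the `nᵢ`-th neighbour other than the vertex just left. Since
the tree is acyclic, every vertex other than `r` has a unique neighbour closer to `r`; so the
distance to `r` of the vertex named by a list is its length, and this naming is a bijection
that matches adjacency with consing.
-/

open SimpleGraph

/-- The `ℵ₀`-regular tree, modelled on finite lists of naturals: `l` is adjacent to each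
`n :: l`. -/
def natTree : SimpleGraph (List ℕ) where
  Adj l m := (∃ n, m = n :: l) ∨ (∃ n, l = n :: m)
  symm := ⟨fun _ _ h => h.symm⟩
  loopless := ⟨by
    rintro l (⟨n, h⟩ | ⟨n, h⟩) <;>
      exact absurd (congrArg List.length h) (by simp)⟩

namespace SimpleGraph

variable {V : Type*} {G : SimpleGraph V}

theorem Walk.dist_le_length_of_mem_support {u v x : V} (w : G.Walk u v) (hx : x ∈ w.support) :
    G.dist u x ≤ w.length := by
  classical
  exact (dist_le (w.takeUntil x hx)).trans (w.length_takeUntil_le_length hx)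

theorem IsTree.eq_of_adj_of_dist_add_one_eq (hG : G.IsTree) (r : V) {v p q : V}
    (hp : G.Adj p v) (hq : G.Adj q v)
    (hpd : G.dist r p + 1 = G.dist r v) (hqd : G.dist r q + 1 = G.dist r v) : p = q := by
  obtain ⟨P, hP, hPlen⟩ := hG.connected.exists_path_of_dist r p
  obtain ⟨Q, hQ, hQlen⟩ := hG.connected.exists_path_of_dist r q
  have hvP : v ∉ P.support := fun hv => by
    have := P.dist_le_length_of_mem_support hv
    omega
  have hvQ : v ∉ Q.support := fun hv => by
    have := Q.dist_le_length_of_mem_support hv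
    omega
  have hPQ : P.concat hp = Q.concat hq := congrArg Subtype.val <|
    (hG.isAcyclic.subsingleton_path r v).elim ⟨_, hP.concat hvP hp⟩ ⟨_, hQ.concat hvQ hq⟩
  exact (Walk.concat_inj hPQ).1

theorem IsTree.exists_adj_dist_add_one_eq (hG : G.IsTree) (r : V) {v : V} (hv : v ≠ r) :
    ∃ u, G.Adj u v ∧ G.dist r u + 1 = G.dist r v := by
  obtain ⟨w, hw⟩ := hG.connected.exists_walk_length_eq_dist v r
  cases w with
  | nil => exact absurd rfl hv
  | @cons _ u _ hvu w =>
    have hu : G.dist r u ≤ w.length := dist_comm (G := G) ▸ dist_le w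
    rw [Walk.length_cons, dist_comm] at hw
    refine ⟨u, hvu.symm, ?_⟩
    rcases hG.dist_eq_dist_add_one_of_adj r hvu with h | h <;> omega

theorem nonempty_equiv_nat_neighborSet_diff {v : V}
    (hv : (G.neighborSet v).Infinite ∧ (G.neighborSet v).Countable) (p : V) :
    Nonempty (ℕ ≃ ↥(G.neighborSet v \ {p})) := by
  have : Countable ↥(G.neighborSet v \ {p}) := (hv.2.mono Set.sdiff_subset).to_subtype
  have : Infinite ↥(G.neighborSet v \ {p}) := (hv.1.sdiff (Set.finite_singleton p)).to_subtype
  exact nonempty_equiv_of_countable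

variable (G) in
/-- `treeLabel G r e l = (v, p)`: `v` is the vertex named by `l` and `p` the vertex it was
reached from; `n :: l` names `e v p n`. The root is recorded as `(r, r)`, so that `e r r`
enumerates all neighbours of `r`. -/
def treeLabel (r : V) (e : ∀ v p : V, ℕ ≃ ↥(G.neighborSet v \ {p})) : List ℕ → V × V
  | [] => (r, r)
  | n :: l => ((e (treeLabel r e l).1 (treeLabel r e l).2 n : V), (treeLabel r e l).1)

section treeLabel

variable {r : V} {e : ∀ v p : V, ℕ ≃ ↥(G.neighborSet v \ {p})}

@[simp]
theorem treeLabel_cons_snd (n : ℕ) (l : List ℕ) :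
    (treeLabel G r e (n :: l)).2 = (treeLabel G r e l).1 :=
  rfl

theorem adj_treeLabel_cons (n : ℕ) (l : List ℕ) :
    G.Adj (treeLabel G r e l).1 (treeLabel G r e (n :: l)).1 :=
  (e _ _ n).2.1

theorem treeLabel_cons_ne_snd (n : ℕ) (l : List ℕ) :
    (treeLabel G r e (n :: l)).1 ≠ (treeLabel G r e l).2 :=
  (e _ _ n).2.2

theorem IsTree.dist_treeLabel (hG : G.IsTree) :
    ∀ l : List ℕ, G.dist r (treeLabel G r e l).1 = l.length
  | [] => dist_self
  | [n] => by
    rcases hG.dist_eq_dist_add_one_of_adj r (adj_treeLabel_cons (r := r) (e := e) n []) with h | h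
    · simp [treeLabel] at h
    · simpa [treeLabel] using h
  | n :: m :: l => by
    have hml := hG.dist_treeLabel (m :: l)
    have hl := hG.dist_treeLabel l
    rcases hG.dist_eq_dist_add_one_of_adj r (adj_treeLabel_cons (r := r) (e := e) n (m :: l))
      with h | h
    · -- otherwise `m :: l` would have two neighbours closer to `r`: `l` and `n :: m :: l`
      refine absurd ?_ (treeLabel_cons_ne_snd (r := r) (e := e) n (m :: l))
      rw [treeLabel_cons_snd]
      refine hG.eq_of_adj_of_dist_add_one_eq r (adj_treeLabel_cons n (m :: l)).symm
        (adj_treeLabel_cons m l) ?_ ?_ <;> simp_all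
    · simp_all

theorem IsTree.dist_treeLabel_snd (hG : G.IsTree) (l : List ℕ) :
    G.dist r (treeLabel G r e l).2 = l.length - 1 := by
  cases l with
  | nil => exact dist_self
  | cons n l => simpa [treeLabel] using hG.dist_treeLabel l

theorem IsTree.treeLabel_injective (hG : G.IsTree) :
    Function.Injective fun l => (treeLabel G r e l).1 := by
  intro l m (h : (treeLabel G r e l).1 = (treeLabel G r e m).1)
  have hlen : l.length = m.length := by
    simpa only [hG.dist_treeLabel] using congrArg (G.dist r) h
  induction l generalizing m with
  | nil => exact (List.length_eq_zero_iff.mp hlen.symm).symm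
  | cons n l ih =>
    obtain ⟨n', m, rfl⟩ := List.exists_cons_of_length_eq_add_one hlen.symm
    have hparent : (treeLabel G r e l).1 = (treeLabel G r e m).1 :=
      hG.eq_of_adj_of_dist_add_one_eq r (adj_treeLabel_cons n l)
        (h ▸ adj_treeLabel_cons n' m) (by simp [hG.dist_treeLabel])
        (by simp_all [hG.dist_treeLabel])
    obtain rfl := ih hparent (by simpa using hlen)
    obtain rfl : n = n' := (e _ _).injective (Subtype.ext h)
    rfl

theorem IsTree.treeLabel_surjective (hG : G.IsTree) :
    Function.Surjective fun l => (treeLabel G r e l).1 := by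
  suffices ∀ k v, G.dist r v = k → ∃ l, (treeLabel G r e l).1 = v from fun v => this _ v rfl
  intro k
  induction k with
  | zero => exact fun v hv => ⟨[], hG.connected.dist_eq_zero_iff.mp hv⟩
  | succ k ih =>
    intro v hv
    have hvr : v ≠ r := by
      rintro rfl
      simp at hv
    obtain ⟨u, huv, hu⟩ := hG.exists_adj_dist_add_one_eq r hvr
    obtain ⟨l, rfl⟩ := ih u (by omega)
    have hne : v ≠ (treeLabel G r e l).2 := fun h => by
      have hl := hG.dist_treeLabel (r := r) (e := e) l
      have hsnd := hG.dist_treeLabel_snd (r := r) (e := e) l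
      rw [← h] at hsnd
      omega
    exact ⟨(e _ _).symm ⟨v, huv, hne⟩ :: l, by simp [treeLabel]⟩

theorem IsTree.exists_cons_eq_of_adj_treeLabel (hG : G.IsTree) {l m : List ℕ}
    (hadj : G.Adj (treeLabel G r e l).1 (treeLabel G r e m).1)
    (hlen : m.length = l.length + 1) : ∃ n, m = n :: l := by
  obtain ⟨n, m, rfl⟩ := List.exists_cons_of_length_eq_add_one hlen
  have hparent : (treeLabel G r e m).1 = (treeLabel G r e l).1 :=
    hG.eq_of_adj_of_dist_add_one_eq r (adj_treeLabel_cons n m) hadj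
      (by simp [hG.dist_treeLabel]) (by simp_all [hG.dist_treeLabel])
  exact ⟨n, by rw [hG.treeLabel_injective hparent]⟩

theorem IsTree.natTree_adj_of_adj_treeLabel (hG : G.IsTree) {l m : List ℕ}
    (hadj : G.Adj (treeLabel G r e l).1 (treeLabel G r e m).1) : natTree.Adj l m := by
  rcases hG.dist_eq_dist_add_one_of_adj r hadj with h | h <;>
    simp only [hG.dist_treeLabel] at h
  · exact Or.inr (hG.exists_cons_eq_of_adj_treeLabel hadj.symm h)
  · exact Or.inl (hG.exists_cons_eq_of_adj_treeLabel hadj h)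

end treeLabel

noncomputable def IsTree.treeLabelIso (hG : G.IsTree) (r : V)
    (e : ∀ v p : V, ℕ ≃ ↥(G.neighborSet v \ {p})) : natTree ≃g G where
  toEquiv := .ofBijective _ ⟨hG.treeLabel_injective (r := r) (e := e), hG.treeLabel_surjective⟩
  map_rel_iff' {l m} := by
    refine ⟨hG.natTree_adj_of_adj_treeLabel, ?_⟩
    rintro (⟨n, rfl⟩ | ⟨n, rfl⟩)
    exacts [adj_treeLabel_cons n l, (adj_treeLabel_cons n m).symm]

theorem IsTree.nonempty_natTree_iso (hG : G.IsTree)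
    (hdeg : ∀ v, (G.neighborSet v).Infinite ∧ (G.neighborSet v).Countable) :
    Nonempty (natTree ≃g G) :=
  ⟨hG.treeLabelIso hG.connected.nonempty.some fun v p =>
    (nonempty_equiv_nat_neighborSet_diff (hdeg v) p).some⟩

end SimpleGraph

theorem trees_countably_infinite_valence_isomorphic_general
    {V V' : Type*}
    (G : SimpleGraph V) (G' : SimpleGraph V')
    (hG : G.Connected) (hGac : G.IsAcyclic)
    (hG' : G'.Connected) (hG'ac : G'.IsAcyclic)
    (hdeg : ∀ v : V, (G.neighborSet v).Infinite ∧ (G.neighborSet v).Countable)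
    (hdeg' : ∀ v : V', (G'.neighborSet v).Infinite ∧ (G'.neighborSet v).Countable) :
    Nonempty (G ≃g G') := by
  obtain ⟨e⟩ := IsTree.nonempty_natTree_iso ⟨hG, hGac⟩ hdeg
  obtain ⟨e'⟩ := IsTree.nonempty_natTree_iso ⟨hG', hG'ac⟩ hdeg'
  exact ⟨e.symm.trans e'⟩

/-- Any two trees all of whose vertices have countably infinite degree are
isomorphic. -/
theorem trees_countably_infinite_valence_isomorphic
    {V V' : Type*} [Nonempty V] [Nonempty V']
    (G : SimpleGraph V) (G' : SimpleGraph V')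
    (hG : G.Connected) (hGac : G.IsAcyclic)
    (hG' : G'.Connected) (hG'ac : G'.IsAcyclic)
    (hdeg : ∀ v : V, (G.neighborSet v).Infinite ∧ (G.neighborSet v).Countable)
    (hdeg' : ∀ v : V', (G'.neighborSet v).Infinite ∧ (G'.neighborSet v).Countable) :
    Nonempty (G ≃g G') :=
  trees_countably_infinite_valence_isomorphic_general G G' hG hGac hG' hG'ac hdeg hdeg'
end

section
/- Let C be the circle (for instance the unit circle in ℂ, or AddCircle with period 1). Let (B_k)_{k∈ℕ} be a sequence of subsets of C such that: each B_k is closed and countable; B_0 is a singleton; B_k ⊆ B_{k+1} for all k; and every connected component of C \ B_k contains infinitely many points of B_{k+1}. Let 𝓘 be the collection of all subsets of C that arise as a connected component of C \ B_k for some k ∈ ℕ, and let H be the simple graph with vertex set 𝓘 in which two distinct members I, I' are adjacent if and only if one strictly contains the other and there is no I'' ∈ 𝓘 with I ∩ I' ⊊ I'' ⊊ I ∪ I' strictly between them. Then H is a tree (connected and acyclic), and every vertex of H has countably infinite degree (its neighbour set in H is infinite and countable). -/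
/-- The collection of all connected components of the complements `C \ B k`,
where `C` is the circle. -/
def circleComponents (B : ℕ → Set (AddCircle (1 : ℝ))) : Set (Set (AddCircle (1 : ℝ))) :=
  {I | ∃ (k : ℕ) (x : AddCircle (1 : ℝ)), x ∉ B k ∧ I = connectedComponentIn (B k)ᶜ x}

/-- The Hasse diagram of the inclusion poset of the components: two distinct
components are adjacent iff one strictly contains the other and no component lies
strictly between them. -/
def hasseGraph (B : ℕ → Set (AddCircle (1 : ℝ))) : SimpleGraph (circleComponents B) :=
  SimpleGraph.fromRel (fun I I' =>
    ((I : Set (AddCircle (1 : ℝ))) ⊂ I' ∨ (I' : Set (AddCircle (1 : ℝ))) ⊂ I) ∧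
      ¬ ∃ I'' ∈ circleComponents B,
          (I : Set (AddCircle (1 : ℝ))) ∩ I' ⊂ I'' ∧
            I'' ⊂ (I : Set (AddCircle (1 : ℝ))) ∪ I')

/-! Every component of `C \ B k` meets `B (k + 1)`, so it is not a component of any later
complement and has a well-defined level `k`. A component of level `m` inside one of level `k < m`
lies in a component of level `k + 1`; hence the Hasse diagram only joins consecutive levels, and a
component of level `k + 1` has exactly one neighbour of level `k`. So the diagram is the tree of
parents rooted at the unique level-0 component `C \ {x}`.

Each level is countable, since each of its components contains a point of `B (k + 1)`. Each
component `I` of level `k` has infinitely many children: a countable set cannot disconnect an arc,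
so the points of `I ∩ B (k + 1)` are limits of points of `I \ B (k + 1)`, i.e. endpoints of
children; finitely many children, each an arc with at most two endpoints, cannot account for
infinitely many such points. -/

open Set

theorem Set.OrdConnected.closure_diff_subset {α : Type*} [ConditionallyCompleteLinearOrder α]
    [TopologicalSpace α] [OrderTopology α] {s : Set α} (hs : s.OrdConnected) :
    closure s \ s ⊆ {sInf s, sSup s} := by
  rintro x ⟨hxc, hxs⟩
  have hne : s.Nonempty := closure_nonempty_iff.1 ⟨x, hxc⟩
  by_cases hlow : x ∈ lowerBounds s
  · exact Or.inl ((isGLB_of_mem_closure hlow hxc).csInf_eq hne).symm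
  by_cases hup : x ∈ upperBounds s
  · exact Or.inr ((isLUB_of_mem_closure hup hxc).csSup_eq hne).symm
  simp only [mem_lowerBounds, mem_upperBounds, not_forall, not_le, exists_prop] at hlow hup
  obtain ⟨a, ha, hax⟩ := hlow
  obtain ⟨b, hb, hxb⟩ := hup
  exact absurd (hs.out ha hb ⟨hax.le, hxb.le⟩) hxs

theorem IsPreconnected.subset_closure_diff_of_countable {X : Type*} [MetricSpace X]
    {J C : Set X} (hJ : IsPreconnected J) (hJn : J.Nontrivial) (hC : C.Countable) :
    J ⊆ closure (J \ C) := by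
  intro x hx
  rw [Metric.mem_closure_iff]
  intro ε hε
  obtain ⟨z, hz, hzx⟩ := hJn.exists_ne x
  -- `dist x` maps `J` onto an interval containing `0` and `dist x z > 0`.
  have hdist : (dist x '' J).OrdConnected :=
    (hJ.image _ (continuous_const.dist continuous_id).continuousOn).ordConnected
  have hsub : Ioo 0 (min (dist x z) ε) ⊆ dist x '' J := fun r hr =>
    hdist.out ⟨x, hx, dist_self x⟩ ⟨z, hz, rfl⟩ ⟨hr.1.le, hr.2.le.trans (min_le_left _ _)⟩
  obtain ⟨r, hr, hrC⟩ := ((hC.image (dist x)).dense_compl ℝ).inter_open_nonempty _ isOpen_Ioo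
    (nonempty_Ioo.2 (lt_min (dist_pos.2 hzx.symm) hε))
  obtain ⟨y, hy, rfl⟩ := hsub hr
  exact ⟨y, ⟨hy, fun hyC => hrC ⟨y, hyC, rfl⟩⟩, hr.2.trans_le (min_le_right _ _)⟩

namespace SimpleGraph

variable {V : Type*} {G : SimpleGraph V}

theorem connected_of_exists_adj_lt [Nonempty V] (f : V → ℕ)
    (hzero : ∀ v w, f v = 0 → f w = 0 → v = w)
    (hdesc : ∀ v, f v ≠ 0 → ∃ w, G.Adj v w ∧ f w < f v) : G.Connected := by
  have hroot : ∀ n v, f v = n → ∃ r, f r = 0 ∧ G.Reachable v r := by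
    intro n
    induction n using Nat.strong_induction_on with
    | _ n ih =>
      intro v hv
      by_cases h0 : f v = 0
      · exact ⟨v, h0, .rfl⟩
      obtain ⟨w, hvw, hwv⟩ := hdesc v h0
      obtain ⟨r, hr, hwr⟩ := ih (f w) (hv ▸ hwv) w rfl
      exact ⟨r, hr, hvw.reachable.trans hwr⟩
  obtain ⟨r, hr, -⟩ := hroot _ (Classical.arbitrary V) rfl
  refine (connected_iff_exists_forall_reachable G).2 ⟨r, fun v => ?_⟩
  obtain ⟨r', hr', hvr'⟩ := hroot _ v rfl
  exact hzero r r' hr hr' ▸ hvr'.symm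

theorem isAcyclic_of_unique_adj_lt (f : V → ℕ) (hne : ∀ v w, G.Adj v w → f v ≠ f w)
    (huniq : ∀ v w w', G.Adj v w → G.Adj v w' → f w < f v → f w' < f v → w = w') :
    G.IsAcyclic := by
  classical
  -- The highest vertex of a cycle would have two distinct lower neighbours.
  intro v c hc
  obtain ⟨w, hw, hmax⟩ := c.support.toFinset.exists_max_image f ⟨v, by simp⟩
  rw [List.mem_toFinset] at hw
  set c' := c.rotate w hw
  have hc' : c'.IsCycle := hc.rotate hw
  have hlt : ∀ x ∈ c'.support, G.Adj w x → f x < f w := fun x hx hwx =>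
    lt_of_le_of_ne (hmax x (List.mem_toFinset.2 ((c.mem_support_rotate_iff w hw).1 hx)))
      (hne w x hwx).symm
  have hsnd : G.Adj w c'.snd := c'.adj_snd hc'.not_nil
  have hpen : G.Adj w c'.penultimate := (c'.adj_penultimate hc'.not_nil).symm
  exact hc'.snd_ne_penultimate (huniq w _ _ hsnd hpen
    (hlt _ (c'.getVert_mem_support 1) hsnd) (hlt _ (c'.getVert_mem_support _) hpen))

end SimpleGraph

section Levels

variable {X : Type*} [TopologicalSpace X] {B : ℕ → Set X} {k m : ℕ} {I J : Set X}

def levelComponents (B : ℕ → Set X) (k : ℕ) : Set (Set X) :=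
  connectedComponentIn (B k)ᶜ '' (B k)ᶜ

theorem nonempty_of_mem_levelComponents (hI : I ∈ levelComponents B k) : I.Nonempty := by
  obtain ⟨x, hx, rfl⟩ := hI
  exact ⟨x, mem_connectedComponentIn hx⟩

theorem isPreconnected_of_mem_levelComponents (hI : I ∈ levelComponents B k) :
    IsPreconnected I := by
  obtain ⟨x, -, rfl⟩ := hI
  exact isPreconnected_connectedComponentIn

theorem subset_compl_of_mem_levelComponents (hI : I ∈ levelComponents B k) : I ⊆ (B k)ᶜ := by
  obtain ⟨x, -, rfl⟩ := hI
  exact connectedComponentIn_subset _ _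

theorem eq_of_mem_levelComponents (hI : I ∈ levelComponents B k) (hJ : J ∈ levelComponents B k)
    (h : (I ∩ J).Nonempty) : I = J := by
  obtain ⟨x, -, rfl⟩ := hI
  obtain ⟨y, -, rfl⟩ := hJ
  obtain ⟨z, hzx, hzy⟩ := h
  exact (connectedComponentIn_eq hzx).trans (connectedComponentIn_eq hzy).symm

theorem subset_of_mem_levelComponents (hB : Monotone B) (hkm : k ≤ m)
    (hI : I ∈ levelComponents B k) (hJ : J ∈ levelComponents B m) (h : (J ∩ I).Nonempty) :
    J ⊆ I := by
  obtain ⟨x, -, rfl⟩ := hI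
  obtain ⟨y, -, rfl⟩ := hJ
  obtain ⟨z, hzy, hzx⟩ := h
  rw [connectedComponentIn_eq hzx]
  exact isPreconnected_connectedComponentIn.subset_connectedComponentIn hzy
    ((connectedComponentIn_subset _ _).trans (compl_subset_compl.2 (hB hkm)))

theorem exists_levelComponents_superset (hB : Monotone B) (hkm : k ≤ m)
    (hJ : J ∈ levelComponents B m) : ∃ I ∈ levelComponents B k, J ⊆ I := by
  obtain ⟨x, hx, rfl⟩ := hJ
  exact ⟨_, mem_image_of_mem _ fun h => hx (hB hkm h),
    connectedComponentIn_mono x (compl_subset_compl.2 (hB hkm))⟩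

theorem levelComponents_countable (hcount : (B (k + 1)).Countable)
    (hnext : ∀ I ∈ levelComponents B k, (I ∩ B (k + 1)).Nonempty) :
    (levelComponents B k).Countable := by
  refine (hcount.image (connectedComponentIn (B k)ᶜ)).mono fun I hI => ?_
  obtain ⟨y, hyI, hy⟩ := hnext I hI
  obtain ⟨x, -, rfl⟩ := hI
  exact ⟨y, hy, (connectedComponentIn_eq hyI).symm⟩

theorem notMem_levelComponents_of_lt (hB : Monotone B)
    (hnext : (I ∩ B (k + 1)).Nonempty) (hkm : k < m) : I ∉ levelComponents B m := fun hI => by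
  obtain ⟨y, hyI, hyB⟩ := hnext
  exact subset_compl_of_mem_levelComponents hI hyI (hB hkm hyB)

theorem level_eq_of_mem_levelComponents (hB : Monotone B)
    (hnext : ∀ k, ∀ I ∈ levelComponents B k, (I ∩ B (k + 1)).Nonempty)
    (hk : I ∈ levelComponents B k) (hm : I ∈ levelComponents B m) : k = m := by
  rcases lt_trichotomy k m with hkm | rfl | hmk
  · exact absurd hm (notMem_levelComponents_of_lt hB (hnext k I hk) hkm)
  · rfl
  · exact absurd hk (notMem_levelComponents_of_lt hB (hnext m I hm) hmk)

theorem lt_of_ssubset_of_mem_levelComponents (hB : Monotone B) (hI : I ∈ levelComponents B k)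
    (hJ : J ∈ levelComponents B m) (h : J ⊂ I) : k < m := by
  by_contra! hmk
  have hJI : (I ∩ J).Nonempty := by
    rw [inter_eq_right.2 h.subset]
    exact nonempty_of_mem_levelComponents hJ
  exact h.not_subset (subset_of_mem_levelComponents hB hmk hJ hI hJI)

theorem ssubset_of_mem_levelComponents_succ (hnext : (I ∩ B (k + 1)).Nonempty)
    (hJ : J ∈ levelComponents B (k + 1)) (h : J ⊆ I) : J ⊂ I := by
  obtain ⟨y, hyI, hyB⟩ := hnext
  exact ssubset_of_subset_of_ne h fun hJI =>
    subset_compl_of_mem_levelComponents hJ (hJI ▸ hyI) hyB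

theorem covBy_iff_of_mem_levelComponents (hB : Monotone B)
    (hnext : ∀ k, ∀ I ∈ levelComponents B k, (I ∩ B (k + 1)).Nonempty)
    (hI : I ∈ levelComponents B k) (hJ : J ∈ levelComponents B m) :
    (J ⊂ I ∧ ¬∃ K ∈ ⋃ n, levelComponents B n, J ⊂ K ∧ K ⊂ I) ↔ J ⊆ I ∧ m = k + 1 := by
  constructor
  · rintro ⟨hJI, hno⟩
    have hkm := lt_of_ssubset_of_mem_levelComponents hB hI hJ hJI
    refine ⟨hJI.subset, ?_⟩
    by_contra hm
    obtain ⟨K, hK, hJK⟩ := exists_levelComponents_superset hB hkm hJ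
    have hKI : K ⊆ I := subset_of_mem_levelComponents hB k.le_succ hI hK
      ((nonempty_of_mem_levelComponents hJ).mono (subset_inter hJK hJI.subset))
    refine hno ⟨K, mem_iUnion_of_mem _ hK, ssubset_of_subset_of_ne hJK fun hJK' => ?_,
      ssubset_of_mem_levelComponents_succ (hnext k I hI) hK hKI⟩
    exact hm (level_eq_of_mem_levelComponents hB hnext hJ (hJK' ▸ hK))
  · rintro ⟨hJI, rfl⟩
    refine ⟨ssubset_of_mem_levelComponents_succ (hnext k I hI) hJ hJI, ?_⟩
    rintro ⟨K, hK, hJK, hKI⟩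
    obtain ⟨n, hK⟩ := mem_iUnion.1 hK
    have := lt_of_ssubset_of_mem_levelComponents hB hI hK hKI
    have := lt_of_ssubset_of_mem_levelComponents hB hK hJ hJK
    omega

end Levels

namespace AddCircle

variable {p : ℝ} [Fact (0 < p)]

theorem isConnected_compl_singleton (x : AddCircle p) : IsConnected ({x}ᶜ : Set _) := by
  obtain ⟨a, rfl⟩ := QuotientAddGroup.mk_surjective x
  have h := (openPartialHomeomorphCoe p a).image_source_eq_target
  simp only [openPartialHomeomorphCoe_source, openPartialHomeomorphCoe_target] at h
  rw [← h]
  exact (isConnected_Ioo (lt_add_of_pos_right a Fact.out)).image _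
    (openPartialHomeomorphCoe p a).continuousOn

theorem finite_closure_diff_of_isPreconnected {J : Set (AddCircle p)} (hJ : IsPreconnected J)
    {x : AddCircle p} (hx : x ∉ J) : (closure J \ J).Finite := by
  -- Lift `J` to an interval `T` of `(a, a + p)`: limit points of `J` outside `J` come from the
  -- endpoints of `T`.
  obtain ⟨a, rfl⟩ := QuotientAddGroup.mk_surjective x
  set e := openPartialHomeomorphCoe p a
  have hJt : J ⊆ e.target := fun y hy (hya : y = _) => hx (hya ▸ hy)
  set T := e.symm '' J
  have hTJ : ((↑) : ℝ → AddCircle p) '' T = J := e.image_symm_image_of_subset_target hJt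
  have hT : T ⊆ Icc a (a + p) := by
    rintro - ⟨y, hy, rfl⟩
    exact Ioo_subset_Icc_self (e.map_target (hJt hy))
  have hTc : T.OrdConnected := (hJ.image _ (e.continuousOn_symm.mono hJt)).ordConnected
  have hclosure : closure J ⊆ (↑) '' closure T := by
    refine closure_minimal (hTJ ▸ image_mono subset_closure) ?_
    exact ((isCompact_Icc.of_isClosed_subset isClosed_closure
      (closure_minimal hT isClosed_Icc)).image (AddCircle.continuous_mk' p)).isClosed
  refine ((toFinite {sInf T, sSup T}).image ((↑) : ℝ → AddCircle p)).subset ?_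
  rintro y ⟨hyc, hyJ⟩
  obtain ⟨t, ht, rfl⟩ := hclosure hyc
  exact mem_image_of_mem _
    (hTc.closure_diff_subset ⟨ht, fun htT => hyJ (hTJ ▸ mem_image_of_mem _ htT)⟩)

theorem infinite_image_connectedComponentIn {K I : Set (AddCircle p)} (hK : K.Countable)
    (hI : IsPreconnected I) (hIK : (I ∩ K).Infinite) :
    (connectedComponentIn Kᶜ '' (I \ K)).Infinite := by
  set S := connectedComponentIn Kᶜ '' (I \ K)
  intro hS
  obtain ⟨x, -, hxK⟩ := hIK.nonempty
  have hcover : I \ K ⊆ ⋃₀ S := fun y hy =>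
    ⟨_, mem_image_of_mem _ hy, mem_connectedComponentIn hy.2⟩
  -- Every point of `I ∩ K` is a limit of points of `I \ K`, hence an endpoint of one of the
  -- finitely many components in `S`, and each of them has finitely many endpoints.
  have hends : I ∩ K ⊆ ⋃ J ∈ S, closure J \ J := by
    intro y hy
    have hy' : y ∈ closure (⋃₀ S) :=
      closure_mono hcover (hI.subset_closure_diff_of_countable
        (hIK.mono inter_subset_left).nontrivial hK hy.1)
    rw [hS.closure_sUnion] at hy'
    obtain ⟨J, hJS, hyJ⟩ := mem_iUnion₂.1 hy'
    refine mem_biUnion hJS ⟨hyJ, fun hyJ' => ?_⟩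
    obtain ⟨z, -, rfl⟩ := hJS
    exact connectedComponentIn_subset _ _ hyJ' hy.2
  refine hIK ((hS.biUnion fun J hJS => ?_).subset hends)
  obtain ⟨z, -, rfl⟩ := hJS
  exact finite_closure_diff_of_isPreconnected isPreconnected_connectedComponentIn
    fun h => connectedComponentIn_subset _ _ h hxK

theorem levelComponents_zero {B : ℕ → Set (AddCircle p)} {x : AddCircle p} (h : B 0 = {x}) :
    levelComponents B 0 = {{x}ᶜ} := by
  have hx := isConnected_compl_singleton x
  rw [levelComponents, h]
  exact (image_congr fun y hy => hx.isPreconnected.connectedComponentIn hy).trans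
    (hx.nonempty.image_const _)

end AddCircle

section HasseGraph

variable {B : ℕ → Set (AddCircle (1 : ℝ))}

theorem mem_circleComponents_iff {I : Set (AddCircle (1 : ℝ))} :
    I ∈ circleComponents B ↔ ∃ k, I ∈ levelComponents B k := by
  simp [circleComponents, levelComponents, eq_comm]

noncomputable def componentLevel (v : circleComponents B) : ℕ :=
  (mem_circleComponents_iff.1 v.2).choose

theorem componentLevel_spec (v : circleComponents B) :
    v.1 ∈ levelComponents B (componentLevel v) :=
  (mem_circleComponents_iff.1 v.2).choose_spec

theorem hasseGraph_adj_iff (hB : Monotone B)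
    (hnext : ∀ k, ∀ I ∈ levelComponents B k, (I ∩ B (k + 1)).Nonempty)
    {u v : circleComponents B} :
    (hasseGraph B).Adj u v ↔ (v.1 ⊆ u.1 ∧ componentLevel v = componentLevel u + 1) ∨
      (u.1 ⊆ v.1 ∧ componentLevel u = componentLevel v + 1) := by
  have hcov : ∀ u v : circleComponents B, (v.1 ⊂ u.1 ∧
      ¬∃ K ∈ circleComponents B, v.1 ∩ u.1 ⊂ K ∧ K ⊂ v.1 ∪ u.1) ↔
        v.1 ⊆ u.1 ∧ componentLevel v = componentLevel u + 1 := fun u v => by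
    rw [← covBy_iff_of_mem_levelComponents hB hnext (componentLevel_spec u)
      (componentLevel_spec v)]
    simp only [mem_circleComponents_iff, mem_iUnion]
    refine and_congr_right fun h => ?_
    rw [inter_eq_left.2 h.subset, union_eq_right.2 h.subset]
  rw [← hcov, ← hcov, hasseGraph, SimpleGraph.fromRel_adj, inter_comm, union_comm]
  have hne : ∀ u v : circleComponents B, v.1 ⊂ u.1 → u ≠ v :=
    fun u v h huv => h.ne (huv ▸ rfl)
  have := hne u v
  have := hne v u
  tauto

theorem componentLevel_eq (hB : Monotone B)
    (hnext : ∀ k, ∀ I ∈ levelComponents B k, (I ∩ B (k + 1)).Nonempty)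
    {v : circleComponents B} {k : ℕ} (hv : v.1 ∈ levelComponents B k) : componentLevel v = k :=
  level_eq_of_mem_levelComponents hB hnext (componentLevel_spec v) hv

theorem hasseGraph_connected (hB : Monotone B)
    (hnext : ∀ k, ∀ I ∈ levelComponents B k, (I ∩ B (k + 1)).Nonempty)
    (hB0 : ∃ x, B 0 = {x}) : (hasseGraph B).Connected := by
  obtain ⟨x, hx⟩ := hB0
  have hroot : ∀ v : circleComponents B, componentLevel v = 0 → v.1 = {x}ᶜ := fun v hv => by
    simpa [AddCircle.levelComponents_zero hx, hv] using componentLevel_spec v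
  have : Nonempty (circleComponents B) :=
    ⟨⟨{x}ᶜ, mem_circleComponents_iff.2 ⟨0, by simp [AddCircle.levelComponents_zero hx]⟩⟩⟩
  refine SimpleGraph.connected_of_exists_adj_lt componentLevel
    (fun v w hv hw => Subtype.ext ((hroot v hv).trans (hroot w hw).symm)) fun v hv => ?_
  obtain ⟨I, hI, hvI⟩ :=
    exists_levelComponents_superset hB (Nat.sub_le _ 1) (componentLevel_spec v)
  set w : circleComponents B := ⟨I, mem_circleComponents_iff.2 ⟨_, hI⟩⟩
  have hw : componentLevel w = componentLevel v - 1 := componentLevel_eq hB hnext hI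
  exact ⟨w, (hasseGraph_adj_iff hB hnext).2 (.inr ⟨hvI, by omega⟩), by omega⟩

theorem hasseGraph_isAcyclic (hB : Monotone B)
    (hnext : ∀ k, ∀ I ∈ levelComponents B k, (I ∩ B (k + 1)).Nonempty) :
    (hasseGraph B).IsAcyclic := by
  refine SimpleGraph.isAcyclic_of_unique_adj_lt componentLevel
    (fun v w hvw => by rcases (hasseGraph_adj_iff hB hnext).1 hvw with h | h <;> omega)
    fun v w w' hw hw' hlt hlt' => ?_
  obtain ⟨hvw, hlw⟩ : v.1 ⊆ w.1 ∧ componentLevel v = componentLevel w + 1 := by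
    rcases (hasseGraph_adj_iff hB hnext).1 hw with h | h
    · omega
    · exact h
  obtain ⟨hvw', hlw'⟩ : v.1 ⊆ w'.1 ∧ componentLevel v = componentLevel w' + 1 := by
    rcases (hasseGraph_adj_iff hB hnext).1 hw' with h | h
    · omega
    · exact h
  obtain ⟨y, hy⟩ := nonempty_of_mem_levelComponents (componentLevel_spec v)
  refine Subtype.ext
    (eq_of_mem_levelComponents (componentLevel_spec w) ?_ ⟨y, hvw hy, hvw' hy⟩)
  exact (show componentLevel w' = componentLevel w by omega) ▸ componentLevel_spec w'

theorem countable_neighborSet_hasseGraph (hB : Monotone B)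
    (hnext : ∀ k, ∀ I ∈ levelComponents B k, (I ∩ B (k + 1)).Nonempty)
    (hcount : ∀ k, (B k).Countable) (v : circleComponents B) :
    ((hasseGraph B).neighborSet v).Countable := by
  have hlevel : ∀ m, {u : circleComponents B | componentLevel u = m}.Countable := fun m =>
    ((levelComponents_countable (hcount _) (hnext m)).preimage Subtype.val_injective).mono
      fun u hu => hu ▸ componentLevel_spec u
  refine ((hlevel (componentLevel v + 1)).union (hlevel (componentLevel v - 1))).mono
    fun u hu => ?_
  rcases (hasseGraph_adj_iff hB hnext).1 hu with h | h
  · exact .inl h.2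
  · exact .inr (show componentLevel u = componentLevel v - 1 by omega)

theorem infinite_neighborSet_hasseGraph (hB : Monotone B)
    (hinf : ∀ k, ∀ I ∈ levelComponents B k, (I ∩ B (k + 1)).Infinite)
    (hcount : ∀ k, (B k).Countable) (v : circleComponents B) :
    ((hasseGraph B).neighborSet v).Infinite := by
  have hnext k I hI := (hinf k I hI).nonempty
  set k := componentLevel v
  have hv := componentLevel_spec v
  have hchildren := AddCircle.infinite_image_connectedComponentIn (hcount (k + 1))
    (isPreconnected_of_mem_levelComponents hv) (hinf k _ hv)
  refine fun hfin => hchildren ((hfin.image Subtype.val).subset ?_)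
  rintro - ⟨y, hy, rfl⟩
  have hJ : connectedComponentIn (B (k + 1))ᶜ y ∈ levelComponents B (k + 1) :=
    mem_image_of_mem _ hy.2
  refine ⟨⟨_, mem_circleComponents_iff.2 ⟨_, hJ⟩⟩,
    (hasseGraph_adj_iff hB hnext).2 (.inl ⟨?_, ?_⟩), rfl⟩
  · exact subset_of_mem_levelComponents hB k.le_succ hv hJ
      ⟨y, mem_connectedComponentIn hy.2, hy.1⟩
  · exact componentLevel_eq hB hnext hJ

end HasseGraph

theorem hasse_diagram_is_countably_infinite_valent_tree_general
    (B : ℕ → Set (AddCircle (1 : ℝ)))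
    (hcount : ∀ k, (B k).Countable)
    (hB0 : ∃ x, B 0 = {x})
    (hmono : ∀ k, B k ⊆ B (k + 1))
    (hcomp : ∀ k (x : AddCircle (1 : ℝ)), x ∉ B k →
      (connectedComponentIn (B k)ᶜ x ∩ B (k + 1)).Infinite) :
    (hasseGraph B).IsTree ∧
      ∀ v, ((hasseGraph B).neighborSet v).Infinite ∧
        ((hasseGraph B).neighborSet v).Countable := by
  have hB : Monotone B := monotone_nat_of_le_succ hmono
  have hinf : ∀ k, ∀ I ∈ levelComponents B k, (I ∩ B (k + 1)).Infinite := by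
    rintro k - ⟨x, hx, rfl⟩
    exact hcomp k x hx
  have hnext k I hI := (hinf k I hI).nonempty
  exact ⟨⟨hasseGraph_connected hB hnext hB0, hasseGraph_isAcyclic hB hnext⟩, fun v =>
    ⟨infinite_neighborSet_hasseGraph hB hinf hcount v,
      countable_neighborSet_hasseGraph hB hnext hcount v⟩⟩

/-- The Hasse diagram of the complementary components of an increasing sequence of
closed countable subsets of the circle, starting from a singleton and such that every
component of each complement contains infinitely many points of the next set, is a
tree all of whose vertices have countably infinite degree. -/
theorem hasse_diagram_is_countably_infinite_valent_tree
    (B : ℕ → Set (AddCircle (1 : ℝ)))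
    (hclosed : ∀ k, IsClosed (B k))
    (hcount : ∀ k, (B k).Countable)
    (hB0 : ∃ x, B 0 = {x})
    (hmono : ∀ k, B k ⊆ B (k + 1))
    (hcomp : ∀ k (x : AddCircle (1 : ℝ)), x ∉ B k →
      (connectedComponentIn (B k)ᶜ x ∩ B (k + 1)).Infinite) :
    (hasseGraph B).IsTree ∧
      ∀ v, ((hasseGraph B).neighborSet v).Infinite ∧
        ((hasseGraph B).neighborSet v).Countable :=
  hasse_diagram_is_countably_infinite_valent_tree_general B hcount hB0 hmono hcomp
end
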